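/- Let f₁ : ℝᵐ → ℝᵐ and f₂ : ℝᵐ × ℝᵏ → ℝᵏ be continuous, and consider the cascade ẋ₁ = f₁(x₁), ẋ₂ = f₂(x₁, x₂) on ℝᵐ × ℝᵏ, where a solution of the cascade is a differentiable function (φ₁, φ₂) : [0, T) → ℝᵐ × ℝᵏ with φ₁′(t) = f₁(φ₁(t)) and φ₂′(t) = f₂(φ₁(t), φ₂(t)) for all t ∈ [0, T), complete if T = ∞. Suppose the origin 0 ∈ ℝᵐ is stable and globally attractive for the upper subsystem ẋ₁ = f₁(x₁), and the origin 0 ∈ ℝᵏ is stable and globally attractive for the zero-input lower subsystem ẋ₂ = f₂(0, x₂). Then the origin (0,0) is stable for the cascade, and every bounded complete solution (φ₁, φ₂) of the cascade satisfies (φ₁(t), φ₂(t)) → (0,0) as t → ∞. -/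

import Mathlib

open Metric Filter Topology

/-- `φ` restricted to `[0, T)` (with `0 < T ≤ ∞`) is a solution of `ẋ = h x`. -/
def IsSolutionOn {E : Type*} [NormedAddCommGroup E] [NormedSpace ℝ E]
    (h : E → E) (T : EReal) (φ : ℝ → E) : Prop :=
  0 < T ∧ ∀ t : ℝ, 0 ≤ t → (t : EReal) < T →
    HasDerivWithinAt φ (h (φ t)) {s : ℝ | 0 ≤ s ∧ (s : EReal) < T} t

/-- `(φ₁, φ₂)` restricted to `[0, T)` is a solution of the cascade
`ẋ₁ = f₁ x₁`, `ẋ₂ = f₂ (x₁, x₂)`. -/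
def IsCascadeSolution {m k : ℕ}
    (f₁ : EuclideanSpace ℝ (Fin m) → EuclideanSpace ℝ (Fin m))
    (f₂ : EuclideanSpace ℝ (Fin m) × EuclideanSpace ℝ (Fin k) → EuclideanSpace ℝ (Fin k))
    (T : EReal) (φ₁ : ℝ → EuclideanSpace ℝ (Fin m))
    (φ₂ : ℝ → EuclideanSpace ℝ (Fin k)) : Prop :=
  0 < T ∧ ∀ t : ℝ, 0 ≤ t → (t : EReal) < T →
    HasDerivWithinAt φ₁ (f₁ (φ₁ t)) {s : ℝ | 0 ≤ s ∧ (s : EReal) < T} t ∧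
    HasDerivWithinAt φ₂ (f₂ (φ₁ t, φ₂ t)) {s : ℝ | 0 ≤ s ∧ (s : EReal) < T} t

/-!
Both claims are proved by contradiction through one compactness argument. A failure yields,
for larger and larger `n`, pieces of cascade solutions on which the lower component crosses
from the sphere of radius `r` to the sphere of radius `ε`, staying in between, while the upper
component becomes uniformly small (by stability, resp. attractivity, of the upper subsystem).
Shifted to start at time `0`, the lower components are uniformly bounded and uniformly
Lipschitz, so a subsequence converges pointwise (diagonal argument over the rationals), and
passing to the limit in `x₂ t = x₂ 0 + ∫₀ᵗ f₂ (x₁ s, x₂ s) ds` shows that the limit solves the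
zero-input system `ẋ₂ = f₂ (0, x₂)`. If the crossing times are unbounded, the limit is a complete
solution staying outside the `r`-ball, contradicting attractivity; if they converge to `Λ`, the
limit starts in the `r`-ball and reaches the `ε`-sphere at time `Λ`, contradicting stability.
-/

open Set MeasureTheory
open scoped NNReal

section Solutions

variable {E : Type*} [NormedAddCommGroup E] [NormedSpace ℝ E]

def IsStableOrigin (h : E → E) : Prop :=
  ∀ ε > (0 : ℝ), ∃ δ > (0 : ℝ), ∀ (T : EReal) (φ : ℝ → E),
    IsSolutionOn h T φ → ‖φ 0‖ < δ → ∀ t : ℝ, 0 ≤ t → (t : EReal) < T → ‖φ t‖ < ε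

def IsAttractiveOrigin (h : E → E) : Prop :=
  ∀ φ : ℝ → E, IsSolutionOn h ⊤ φ → Tendsto φ atTop (𝓝 0)

def SolutionsStayInBall (h : E → E) (r ε : ℝ) : Prop :=
  ∀ (T : EReal) (φ : ℝ → E), IsSolutionOn h T φ → ‖φ 0‖ ≤ r →
    ∀ t : ℝ, 0 ≤ t → (t : EReal) < T → ‖φ t‖ < ε

theorem IsStableOrigin.exists_radius {h : E → E} (hs : IsStableOrigin h) {ε : ℝ} (hε : 0 < ε) :
    ∃ r > 0, r < ε ∧ SolutionsStayInBall h r (ε / 2) := by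
  obtain ⟨δ, hδ, hφ⟩ := hs (ε / 2) (by positivity)
  refine ⟨min (δ / 2) (ε / 2), by positivity, by linarith [min_le_right (δ / 2) (ε / 2)],
    fun T φ hsol h0 => hφ T φ hsol ?_⟩
  linarith [min_le_left (δ / 2) (ε / 2)]

theorem IsSolutionOn.of_eq_add_integral [CompleteSpace E] {h : E → E} {T : EReal} {ψ : ℝ → E}
    (hT : 0 < T) (hh : Continuous h) (hψ : Continuous ψ)
    (heq : ∀ t : ℝ, 0 ≤ t → (t : EReal) < T → ψ t = ψ 0 + ∫ s in (0 : ℝ)..t, h (ψ s)) :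
    IsSolutionOn h T ψ := by
  refine ⟨hT, fun t ht htT => ?_⟩
  have hcont : Continuous fun s => h (ψ s) := hh.comp hψ
  have hF : HasDerivAt (fun u => ψ 0 + ∫ s in (0 : ℝ)..u, h (ψ s)) (h (ψ t)) t :=
    (intervalIntegral.integral_hasDerivAt_right (hcont.intervalIntegrable 0 t)
      (hcont.stronglyMeasurableAtFilter _ _) hcont.continuousAt).const_add _
  exact hF.hasDerivWithinAt.congr (fun u hu => heq u hu.1 hu.2) (heq t ht htT)

theorem eq_add_integral_of_hasDerivWithinAt [CompleteSpace E] {φ φ' : ℝ → E} {L t : ℝ}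
    (hφ : ∀ x ∈ Icc 0 L, HasDerivWithinAt φ (φ' x) (Icc 0 L) x) (hφ' : Continuous φ')
    (ht : t ∈ Icc 0 L) : φ t = φ 0 + ∫ s in (0 : ℝ)..t, φ' s := by
  have hsub : Icc 0 t ⊆ Icc 0 L := Icc_subset_Icc_right ht.2
  rw [intervalIntegral.integral_eq_sub_of_hasDerivAt_of_le ht.1
    (fun x hx => (hφ x (hsub hx)).continuousWithinAt.mono hsub)
    (fun x hx => (hφ x (hsub (Ioo_subset_Icc_self hx))).hasDerivAt
      (Icc_mem_nhds hx.1 (hx.2.trans_le ht.2)))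
    (hφ'.intervalIntegrable 0 t)]
  abel

end Solutions

theorem cauchySeq_apply_of_lipschitzWith {E : Type*} [PseudoMetricSpace E] {β : ℕ → ℝ → E}
    {C : ℝ≥0}
    (hβ : ∀ n, LipschitzWith C (β n)) (hq : ∀ q : ℚ, CauchySeq fun n => β n q) (t : ℝ) :
    CauchySeq fun n => β n t := by
  rw [Metric.cauchySeq_iff]
  intro ε hε
  obtain ⟨q, hq_near⟩ := exists_rat_near t (show 0 < ε / (3 * (C + 1)) by positivity)
  obtain ⟨N, hN⟩ := Metric.cauchySeq_iff.mp (hq q) (ε / 3) (by positivity)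
  have hclose : ∀ n, dist (β n t) (β n q) ≤ ε / 3 := fun n => calc
    dist (β n t) (β n q) ≤ C * dist t q := (hβ n).dist_le_mul _ _
    _ ≤ (C + 1) * (ε / (3 * (C + 1))) := by
      rw [Real.dist_eq]; gcongr; linarith
    _ = ε / 3 := by field_simp
  refine ⟨N, fun a ha b hb => ?_⟩
  calc dist (β a t) (β b t) ≤ dist (β a t) (β a q) + dist (β a q) (β b q) + dist (β b q) (β b t) :=
        dist_triangle4 _ _ _ _
    _ < ε := by linarith [hclose a, hclose b, dist_comm (β b t) (β b q), hN a ha b hb]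

theorem exists_subseq_tendsto_of_lipschitzWith {E : Type*} [NormedAddCommGroup E] [ProperSpace E]
    {β : ℕ → ℝ → E} {C : ℝ≥0} {R : ℝ}
    (hβ : ∀ n, LipschitzWith C (β n)) (hR : ∀ n t, ‖β n t‖ ≤ R) :
    ∃ σ : ℕ → ℕ, StrictMono σ ∧ ∃ ψ : ℝ → E, LipschitzWith C ψ ∧
      ∀ t, Tendsto (fun n => β (σ n) t) atTop (𝓝 (ψ t)) := by
  have : CompactSpace (closedBall (0 : E) R) :=
    isCompact_iff_compactSpace.mp (isCompact_closedBall _ _)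
  obtain ⟨G, σ, hσ, hG⟩ := CompactSpace.tendsto_subseq fun n (q : ℚ) =>
    (⟨β n q, mem_closedBall_zero_iff.mpr (hR n q)⟩ : closedBall (0 : E) R)
  have hq : ∀ q : ℚ, CauchySeq fun n => β (σ n) q := fun q =>
    ((continuous_subtype_val.tendsto (G q)).comp (tendsto_pi_nhds.mp hG q)).cauchySeq
  choose ψ hψ using fun t =>
    cauchySeq_tendsto_of_complete (cauchySeq_apply_of_lipschitzWith (fun n => hβ (σ n)) hq t)
  refine ⟨σ, hσ, ψ, LipschitzWith.of_dist_le_mul fun x y => ?_, hψ⟩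
  exact le_of_tendsto ((hψ x).dist (hψ y)) (Eventually.of_forall fun n => (hβ _).dist_le_mul _ _)

theorem tendsto_apply_of_lipschitzWith {E : Type*} [PseudoMetricSpace E] {β : ℕ → ℝ → E}
    {ψ : ℝ → E} {C : ℝ≥0} (hβ : ∀ n, LipschitzWith C (β n)) {x : ℝ}
    (hβψ : Tendsto (fun n => β n x) atTop (𝓝 (ψ x))) {u : ℕ → ℝ} (hu : Tendsto u atTop (𝓝 x)) :
    Tendsto (fun n => β n (u n)) atTop (𝓝 (ψ x)) := by
  rw [tendsto_iff_dist_tendsto_zero] at hβψ hu ⊢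
  refine squeeze_zero (fun n => dist_nonneg) (fun n => (dist_triangle _ (β n x) _).trans
    (add_le_add_left ((hβ n).dist_le_mul _ _) _)) ?_
  simpa using (hu.const_mul (C : ℝ)).add hβψ

section VanishingInput

variable {E₁ E₂ : Type*} [NormedAddCommGroup E₁] [NormedAddCommGroup E₂] [NormedSpace ℝ E₂]

structure IsVanishingInputFamily (f : E₁ × E₂ → E₂) (L : ℕ → ℝ) (α : ℕ → ℝ → E₁)
    (β : ℕ → ℝ → E₂) : Prop where
  continuous_input : ∀ n, Continuous (α n)
  tendsto_input : ∀ t, Tendsto (fun n => α n t) atTop (𝓝 0)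
  lipschitzWith : ∃ C, ∀ n, LipschitzWith C (β n)
  norm_le : ∃ R, ∀ n t, ‖β n t‖ ≤ R
  hasDerivWithinAt : ∀ n, ∀ t ∈ Icc 0 (L n),
    HasDerivWithinAt (β n) (f (α n t, β n t)) (Icc 0 (L n)) t

namespace IsVanishingInputFamily

variable {f : E₁ × E₂ → E₂} {L : ℕ → ℝ} {α : ℕ → ℝ → E₁} {β : ℕ → ℝ → E₂}

theorem comp (h : IsVanishingInputFamily f L α β) {σ : ℕ → ℕ} (hσ : Tendsto σ atTop atTop) :
    IsVanishingInputFamily f (fun n => L (σ n)) (fun n => α (σ n)) (fun n => β (σ n)) where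
  continuous_input n := h.continuous_input (σ n)
  tendsto_input t := (h.tendsto_input t).comp hσ
  lipschitzWith := h.lipschitzWith.imp fun _ hC n => hC (σ n)
  norm_le := h.norm_le.imp fun _ hR n => hR (σ n)
  hasDerivWithinAt n := h.hasDerivWithinAt (σ n)

theorem isSolutionOn_of_tendsto [CompleteSpace E₂] (h : IsVanishingInputFamily f L α β)
    (hf : Continuous f) {Λ : EReal} (hΛ : 0 < Λ)
    (hL : ∀ t : ℝ, (t : EReal) < Λ → ∀ᶠ n in atTop, t < L n) {ψ : ℝ → E₂} (hψ : Continuous ψ)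
    (hβψ : ∀ t, Tendsto (fun n => β n t) atTop (𝓝 (ψ t))) :
    IsSolutionOn (fun y => f (0, y)) Λ ψ := by
  obtain ⟨C, hC⟩ := h.lipschitzWith
  have hF : ∀ n, Continuous fun s => f (α n s, β n s) := fun n =>
    hf.comp ((h.continuous_input n).prodMk (hC n).continuous)
  refine .of_eq_add_integral hΛ (hf.comp (continuous_const.prodMk continuous_id)) hψ
    fun t ht htΛ => ?_
  -- the integrands are dominated by `C`: on `(0, t] ⊆ (0, L n)` they are derivatives of
  -- the `C`-Lipschitz functions `β n`
  have hint : Tendsto (fun n => ∫ s in (0 : ℝ)..t, f (α n s, β n s)) atTop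
      (𝓝 (∫ s in (0 : ℝ)..t, f (0, ψ s))) := by
    refine intervalIntegral.tendsto_integral_filter_of_dominated_convergence (fun _ => (C : ℝ))
      (Eventually.of_forall fun n => (hF n).aestronglyMeasurable) ?_ intervalIntegrable_const
      (ae_of_all _ fun s _ => (hf.tendsto _).comp ((h.tendsto_input s).prodMk_nhds (hβψ s)))
    filter_upwards [hL t htΛ] with n hn
    refine ae_of_all _ fun s hs => ?_
    rw [uIoc_of_le ht] at hs
    exact ((h.hasDerivWithinAt n s ⟨hs.1.le, hs.2.trans hn.le⟩).hasDerivAt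
      (Icc_mem_nhds hs.1 (hs.2.trans_lt hn))).le_of_lipschitz (hC n)
  refine tendsto_nhds_unique (hβψ t) (((hβψ 0).add hint).congr' ?_)
  filter_upwards [hL t htΛ] with n hn
  exact (eq_add_integral_of_hasDerivWithinAt (h.hasDerivWithinAt n) (hF n) ⟨ht, hn.le⟩).symm

variable [ProperSpace E₂]

theorem false_of_le_norm (h : IsVanishingInputFamily f L α β) (hf : Continuous f)
    (hattr : IsAttractiveOrigin fun y => f (0, y)) (hL : Tendsto L atTop atTop) {r : ℝ}
    (hr : 0 < r) (hβ : ∀ n, ∀ t ∈ Icc 0 (L n), r ≤ ‖β n t‖) : False := by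
  obtain ⟨C, hC⟩ := h.lipschitzWith
  obtain ⟨R, hR⟩ := h.norm_le
  obtain ⟨σ, hσ, ψ, hψ, hβψ⟩ := exists_subseq_tendsto_of_lipschitzWith hC hR
  have hLσ := hL.comp hσ.tendsto_atTop
  have hsol := (h.comp hσ.tendsto_atTop).isSolutionOn_of_tendsto hf EReal.zero_lt_top
    (fun t _ => hLσ.eventually_gt_atTop t) hψ.continuous hβψ
  have hψr : ∀ t, 0 ≤ t → r ≤ ‖ψ t‖ := fun t ht => ge_of_tendsto (hβψ t).norm <| by
    filter_upwards [hLσ.eventually_ge_atTop t] with n hn using hβ _ t ⟨ht, hn⟩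
  obtain ⟨t, hψt, ht⟩ :=
    (((hattr ψ hsol).eventually (ball_mem_nhds 0 hr)).and (eventually_ge_atTop 0)).exists
  exact (mem_ball_zero_iff.mp hψt).not_ge (hψr t ht)

theorem false_of_tendsto_length (h : IsVanishingInputFamily f L α β) (hf : Continuous f)
    {r ε ε' : ℝ} (hrε : r < ε) (hε' : ε' < ε)
    (hstab : SolutionsStayInBall (fun y => f (0, y)) r ε')
    {Λ : ℝ} (hΛ : 0 ≤ Λ) (hL : Tendsto L atTop (𝓝 Λ)) (hstart : ∀ n, ‖β n 0‖ ≤ r)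
    (hend : ∀ n, ε ≤ ‖β n (L n)‖) : False := by
  obtain ⟨C, hC⟩ := h.lipschitzWith
  obtain ⟨R, hR⟩ := h.norm_le
  obtain ⟨σ, hσ, ψ, hψ, hβψ⟩ := exists_subseq_tendsto_of_lipschitzWith hC hR
  have hLσ := hL.comp hσ.tendsto_atTop
  have hψ0 : ‖ψ 0‖ ≤ r := le_of_tendsto (hβψ 0).norm (Eventually.of_forall fun n => hstart _)
  have hψΛ : ε ≤ ‖ψ Λ‖ := ge_of_tendsto
    (tendsto_apply_of_lipschitzWith (fun n => hC (σ n)) (hβψ Λ) hLσ).norm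
    (Eventually.of_forall fun n => hend _)
  rcases hΛ.eq_or_lt with rfl | hΛ
  · linarith
  have hsol := (h.comp hσ.tendsto_atTop).isSolutionOn_of_tendsto hf (EReal.coe_pos.mpr hΛ)
    (fun t ht => hLσ.eventually (lt_mem_nhds (EReal.coe_lt_coe_iff.mp ht))) hψ.continuous hβψ
  have hψΛ' : ‖ψ Λ‖ ≤ ε' := by
    refine le_of_tendsto
      ((hψ.continuous.norm.tendsto Λ).mono_left (nhdsWithin_le_nhds (s := Iio Λ))) ?_
    filter_upwards [Ioo_mem_nhdsLT hΛ] with t ht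
    exact (hstab _ ψ hsol hψ0 t ht.1.le (EReal.coe_lt_coe_iff.mpr ht.2)).le
  linarith

theorem false_of_crossing (h : IsVanishingInputFamily f L α β) (hf : Continuous f)
    (hattr : IsAttractiveOrigin fun y => f (0, y)) {r ε ε' : ℝ} (hr : 0 < r) (hrε : r < ε)
    (hε' : ε' < ε)
    (hstab : SolutionsStayInBall (fun y => f (0, y)) r ε')
    (hL : ∀ n, 0 ≤ L n) (hβ : ∀ n, ∀ t ∈ Icc 0 (L n), r ≤ ‖β n t‖)
    (hstart : ∀ n, ‖β n 0‖ ≤ r) (hend : ∀ n, ε ≤ ‖β n (L n)‖) : False := by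
  by_cases hLtop : Tendsto L atTop atTop
  · exact h.false_of_le_norm hf hattr hLtop hr hβ
  obtain ⟨A, hA⟩ : ∃ A, ∃ᶠ n in atTop, L n < A := by
    simpa [Filter.tendsto_atTop, not_eventually, frequently_atTop] using hLtop
  obtain ⟨Λ, hΛ, σ, hσ, hLσ⟩ :=
    isCompact_Icc.tendsto_subseq' (hA.mono fun n hn => (⟨hL n, hn.le⟩ : L n ∈ Icc 0 A))
  exact (h.comp hσ.tendsto_atTop).false_of_tendsto_length hf hrε hε' hstab hΛ.1 hLσ
    (fun n => hstart _) (fun n => hend _)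

end IsVanishingInputFamily

end VanishingInput

section Crossing

variable {g : ℝ → ℝ} {a b c : ℝ}

theorem exists_first_eq (hab : a ≤ b) (hg : ContinuousOn g (Icc a b)) (ha : g a ≤ c)
    (hb : c ≤ g b) : ∃ τ ∈ Icc a b, g τ = c ∧ ∀ t ∈ Ico a τ, g t < c := by
  set S := Icc a b ∩ g ⁻¹' Ici c
  have hS : IsCompact S :=
    isCompact_Icc.of_isClosed_subset (hg.preimage_isClosed_of_isClosed isClosed_Icc isClosed_Ici)
      inter_subset_left
  have hτ : sInf S ∈ S := hS.sInf_mem ⟨b, ⟨hab, le_rfl⟩, hb⟩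
  have hbefore : ∀ t ∈ Ico a (sInf S), g t < c := fun t ht => not_le.mp fun hct =>
    ht.2.not_ge (csInf_le hS.bddBelow ⟨⟨ht.1, ht.2.le.trans hτ.1.2⟩, hct⟩)
  obtain ⟨t, ht, hgt⟩ := intermediate_value_Icc hτ.1.1 (hg.mono (Icc_subset_Icc_right hτ.1.2))
    ⟨ha, hτ.2⟩
  have : t = sInf S := le_antisymm ht.2 (csInf_le hS.bddBelow ⟨⟨ht.1, ht.2.trans hτ.1.2⟩, hgt.ge⟩)
  exact ⟨sInf S, hτ.1, this ▸ hgt, hbefore⟩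

theorem exists_last_eq (hab : a ≤ b) (hg : ContinuousOn g (Icc a b)) (ha : g a ≤ c)
    (hb : c ≤ g b) : ∃ s ∈ Icc a b, g s = c ∧ ∀ t ∈ Ioc s b, c < g t := by
  set S := Icc a b ∩ g ⁻¹' Iic c
  have hS : IsCompact S :=
    isCompact_Icc.of_isClosed_subset (hg.preimage_isClosed_of_isClosed isClosed_Icc isClosed_Iic)
      inter_subset_left
  have hs : sSup S ∈ S := hS.sSup_mem ⟨a, ⟨le_rfl, hab⟩, ha⟩
  have hafter : ∀ t ∈ Ioc (sSup S) b, c < g t := fun t ht => not_le.mp fun hct =>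
    ht.1.not_ge (le_csSup hS.bddAbove ⟨⟨hs.1.1.trans ht.1.le, ht.2⟩, hct⟩)
  obtain ⟨t, ht, hgt⟩ := intermediate_value_Icc hs.1.2 (hg.mono (Icc_subset_Icc_left hs.1.1))
    ⟨hs.2, hb⟩
  have : t = sSup S := le_antisymm (le_csSup hS.bddAbove ⟨⟨hs.1.1.trans ht.1, ht.2⟩, hgt.le⟩) ht.1
  exact ⟨sSup S, hs.1, this ▸ hgt, hafter⟩

theorem exists_crossing {r ε : ℝ} (hab : a ≤ b) (hg : ContinuousOn g (Icc a b)) (ha : g a ≤ r)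
    (hrε : r < ε) (hb : ε ≤ g b) :
    ∃ s τ, a ≤ s ∧ s ≤ τ ∧ τ ≤ b ∧ g s = r ∧ g τ = ε ∧ ∀ t ∈ Icc s τ, r ≤ g t ∧ g t ≤ ε := by
  obtain ⟨τ, hτ, hgτ, hbefore⟩ := exists_first_eq hab hg (ha.trans hrε.le) hb
  obtain ⟨s, hs, hgs, hafter⟩ :=
    exists_last_eq hτ.1 (hg.mono (Icc_subset_Icc_right hτ.2)) ha (hrε.le.trans hgτ.ge)
  refine ⟨s, τ, hs.1, hs.2, hτ.2, hgs, hgτ, fun t ht => ⟨?_, ?_⟩⟩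
  · rcases ht.1.eq_or_lt with rfl | hst
    exacts [hgs.ge, (hafter t ⟨hst, ht.2⟩).le]
  · rcases ht.2.eq_or_lt with rfl | htτ
    exacts [hgτ.le, (hbefore t ⟨hs.1.trans ht.1, htτ⟩).le]

end Crossing

section ClampShift

variable {E : Type*} {φ φ' : ℝ → E} {a b t : ℝ}

/-- The piece of `φ` on `[a, b]`, moved to `[0, b - a]` and extended by constants: pieces of
solutions become globally Lipschitz functions on `ℝ`. -/
def clampShift (φ : ℝ → E) (a b t : ℝ) : E := φ (max a (min b (a + t)))

theorem max_min_add_mem_Icc (hab : a ≤ b) (t : ℝ) : max a (min b (a + t)) ∈ Icc a b :=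
  ⟨le_max_left _ _, max_le hab (min_le_left _ _)⟩

theorem clampShift_of_mem (ht : t ∈ Icc 0 (b - a)) : clampShift φ a b t = φ (a + t) := by
  rw [clampShift, min_eq_right (by linarith [ht.2]), max_eq_right (by linarith [ht.1])]

theorem continuous_clampShift [TopologicalSpace E] (hab : a ≤ b) (hφ : ContinuousOn φ (Icc a b)) :
    Continuous (clampShift φ a b) :=
  hφ.comp_continuous (continuous_const.max (continuous_const.min (continuous_const.add
    continuous_id))) (max_min_add_mem_Icc hab)

theorem lipschitzWith_clampShift [PseudoMetricSpace E] {C : ℝ≥0} (hab : a ≤ b)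
    (hφ : LipschitzOnWith C φ (Icc a b)) :
    LipschitzWith C (clampShift φ a b) := by
  have hclamp : LipschitzWith 1 fun t => max a (min b (a + t)) :=
    ((isometry_add_left a).lipschitz.const_min b).const_max a
  have h := lipschitzOnWith_univ.mp
    (hφ.comp (hclamp.lipschitzOnWith (s := univ)) fun t _ => max_min_add_mem_Icc hab t)
  rwa [mul_one] at h

theorem hasDerivWithinAt_clampShift [NormedAddCommGroup E] [NormedSpace ℝ E]
    (hφ : ∀ u ∈ Icc a b, HasDerivWithinAt φ (φ' u) (Icc a b) u) (ht : t ∈ Icc 0 (b - a)) :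
    HasDerivWithinAt (clampShift φ a b) (φ' (a + t)) (Icc 0 (b - a)) t := by
  have hmaps : MapsTo (a + ·) (Icc 0 (b - a)) (Icc a b) := fun s hs =>
    ⟨by linarith [hs.1], by linarith [hs.2]⟩
  have hcomp := (hφ (a + t) (hmaps ht)).scomp t
    ((hasDerivAt_id' t).const_add a).hasDerivWithinAt hmaps
  rw [one_smul] at hcomp
  exact hcomp.congr (fun s hs => clampShift_of_mem hs) (clampShift_of_mem ht)

end ClampShift

theorem eventually_forall_Icc_norm_lt {E : Type*} [NormedAddCommGroup E] {φ : ℝ → E}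
    (hφ : Tendsto φ atTop (𝓝 0)) {a : ℕ → ℝ} (ha : Tendsto a atTop atTop) (b : ℕ → ℝ) {η : ℝ}
    (hη : 0 < η) : ∀ᶠ n in atTop, ∀ u ∈ Icc (a n) (b n), ‖φ u‖ < η := by
  obtain ⟨U, hU⟩ := eventually_atTop.mp (NormedAddGroup.tendsto_nhds_zero.mp hφ η hη)
  filter_upwards [ha.eventually_ge_atTop U] with n hn u hu using hU u (hn.trans hu.1)

section Cascade

variable {m k : ℕ} {f₁ : EuclideanSpace ℝ (Fin m) → EuclideanSpace ℝ (Fin m)}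
  {f₂ : EuclideanSpace ℝ (Fin m) × EuclideanSpace ℝ (Fin k) → EuclideanSpace ℝ (Fin k)}

namespace IsCascadeSolution

variable {T : EReal} {φ₁ : ℝ → EuclideanSpace ℝ (Fin m)} {φ₂ : ℝ → EuclideanSpace ℝ (Fin k)}

theorem isSolutionOn_fst (h : IsCascadeSolution f₁ f₂ T φ₁ φ₂) : IsSolutionOn f₁ T φ₁ :=
  ⟨h.1, fun t ht htT => (h.2 t ht htT).1⟩

theorem hasDerivWithinAt_Icc (h : IsCascadeSolution f₁ f₂ T φ₁ φ₂) {a b u : ℝ} (ha : 0 ≤ a)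
    (hb : (b : EReal) < T) (hu : u ∈ Icc a b) :
    HasDerivWithinAt φ₁ (f₁ (φ₁ u)) (Icc a b) u ∧
      HasDerivWithinAt φ₂ (f₂ (φ₁ u, φ₂ u)) (Icc a b) u := by
  have hsub : Icc a b ⊆ {s : ℝ | 0 ≤ s ∧ (s : EReal) < T} := fun s hs =>
    ⟨ha.trans hs.1, (EReal.coe_le_coe_iff.mpr hs.2).trans_lt hb⟩
  obtain ⟨h₁, h₂⟩ := h.2 u (hsub hu).1 (hsub hu).2
  exact ⟨h₁.mono hsub, h₂.mono hsub⟩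

end IsCascadeSolution

variable {T : ℕ → EReal} {g₁ : ℕ → ℝ → EuclideanSpace ℝ (Fin m)}
  {g₂ : ℕ → ℝ → EuclideanSpace ℝ (Fin k)} {a b : ℕ → ℝ}

theorem isVanishingInputFamily_clampShift (hf₂ : Continuous f₂)
    (hg : ∀ n, IsCascadeSolution f₁ f₂ (T n) (g₁ n) (g₂ n)) (ha : ∀ n, 0 ≤ a n)
    (hab : ∀ n, a n ≤ b n) (hbT : ∀ n, (b n : EReal) < T n) {R : ℝ}
    (hR : ∀ n, ∀ u ∈ Icc (a n) (b n), ‖g₁ n u‖ ≤ R ∧ ‖g₂ n u‖ ≤ R)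
    (hsmall : ∀ η > 0, ∀ᶠ n in atTop, ∀ u ∈ Icc (a n) (b n), ‖g₁ n u‖ < η) :
    IsVanishingInputFamily f₂ (fun n => b n - a n) (fun n => clampShift (g₁ n) (a n) (b n))
      (fun n => clampShift (g₂ n) (a n) (b n)) := by
  obtain ⟨B, hB⟩ := ((isCompact_closedBall (0 : EuclideanSpace ℝ (Fin m)) R).prod
    (isCompact_closedBall (0 : EuclideanSpace ℝ (Fin k)) R)).exists_bound_of_continuousOn
    hf₂.continuousOn
  have hderiv := fun n u (hu : u ∈ Icc (a n) (b n)) =>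
    (hg n).hasDerivWithinAt_Icc (ha n) (hbT n) hu
  have hf₂B : ∀ n, ∀ u ∈ Icc (a n) (b n), ‖f₂ (g₁ n u, g₂ n u)‖₊ ≤ B.toNNReal := fun n u hu => by
    rw [← NNReal.coe_le_coe, coe_nnnorm]
    exact (hB (g₁ n u, g₂ n u) (mk_mem_prod (mem_closedBall_zero_iff.mpr (hR n u hu).1)
      (mem_closedBall_zero_iff.mpr (hR n u hu).2))).trans (Real.le_coe_toNNReal B)
  refine
    { continuous_input := fun n => continuous_clampShift (hab n) fun u hu =>
        (hderiv n u hu).1.continuousWithinAt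
      tendsto_input := fun t => NormedAddGroup.tendsto_nhds_zero.mpr fun η hη =>
        (hsmall η hη).mono fun n hn => hn _ (max_min_add_mem_Icc (hab n) t)
      lipschitzWith := ⟨B.toNNReal, fun n => lipschitzWith_clampShift (hab n)
        ((convex_Icc _ _).lipschitzOnWith_of_nnnorm_hasDerivWithin_le
          (fun u hu => (hderiv n u hu).2) (hf₂B n))⟩
      norm_le := ⟨R, fun n t => (hR n _ (max_min_add_mem_Icc (hab n) t)).2⟩
      hasDerivWithinAt := fun n t ht => ?_ }
  have h := hasDerivWithinAt_clampShift (fun u hu => (hderiv n u hu).2) ht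
  rwa [clampShift_of_mem ht, clampShift_of_mem ht]

theorem false_of_cascade_crossings (hf₂ : Continuous f₂)
    (hattr : IsAttractiveOrigin fun y => f₂ (0, y)) {r ε ε' : ℝ} (hr : 0 < r) (hrε : r < ε)
    (hε' : ε' < ε)
    (hstab : SolutionsStayInBall (fun y => f₂ (0, y)) r ε')
    (hg : ∀ n, IsCascadeSolution f₁ f₂ (T n) (g₁ n) (g₂ n)) (ha : ∀ n, 0 ≤ a n)
    (hab : ∀ n, a n ≤ b n) (hbT : ∀ n, (b n : EReal) < T n) {R : ℝ}
    (hR : ∀ n, ∀ u ∈ Icc (a n) (b n), ‖g₁ n u‖ ≤ R)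
    (hsmall : ∀ η > 0, ∀ᶠ n in atTop, ∀ u ∈ Icc (a n) (b n), ‖g₁ n u‖ < η)
    (hstart : ∀ n, ‖g₂ n (a n)‖ ≤ r) (hend : ∀ n, ε ≤ ‖g₂ n (b n)‖) : False := by
  choose s τ has hsτ hτb hs hτ hbetween using fun n => exists_crossing (hab n)
    (fun u hu => ((hg n).hasDerivWithinAt_Icc (ha n) (hbT n) hu).2.continuousWithinAt.norm)
    (hstart n) hrε (hend n)
  have hsub : ∀ n, Icc (s n) (τ n) ⊆ Icc (a n) (b n) := fun n => Icc_subset_Icc (has n) (hτb n)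
  have hfam := isVanishingInputFamily_clampShift hf₂ hg (fun n => (ha n).trans (has n)) hsτ
    (fun n => (EReal.coe_le_coe_iff.mpr (hτb n)).trans_lt (hbT n)) (R := max R ε)
    (fun n u hu => ⟨(hR n u (hsub n hu)).trans (le_max_left _ _),
      (hbetween n u hu).2.trans (le_max_right _ _)⟩)
    (fun η hη => (hsmall η hη).mono fun n hn u hu => hn u (hsub n hu))
  have hL : ∀ n, 0 ≤ τ n - s n := fun n => sub_nonneg.mpr (hsτ n)
  refine hfam.false_of_crossing hf₂ hattr hr hrε hε' hstab hL (fun n t ht => ?_) (fun n => ?_)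
    (fun n => ?_)
  · rw [clampShift_of_mem ht]
    exact (hbetween n _ ⟨by linarith [ht.1], by linarith [ht.2]⟩).1
  · rw [clampShift_of_mem ⟨le_rfl, hL n⟩, add_zero]
    exact (hs n).le
  · rw [clampShift_of_mem ⟨hL n, le_rfl⟩, add_sub_cancel]
    exact (hτ n).ge

namespace IsCascadeSolution

variable {φ₁ : ℝ → EuclideanSpace ℝ (Fin m)} {φ₂ : ℝ → EuclideanSpace ℝ (Fin k)}

theorem false_of_le_norm_snd (hf₂ : Continuous f₂)
    (hattr : IsAttractiveOrigin fun y => f₂ (0, y)) (hφ : IsCascadeSolution f₁ f₂ ⊤ φ₁ φ₂)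
    {R : ℝ} (hR : ∀ t, 0 ≤ t → ‖φ₁ t‖ ≤ R ∧ ‖φ₂ t‖ ≤ R) (h₁ : Tendsto φ₁ atTop (𝓝 0))
    {r t₀ : ℝ} (hr : 0 < r) (ht₀ : 0 ≤ t₀) (hlow : ∀ t, t₀ ≤ t → r ≤ ‖φ₂ t‖) : False := by
  have ha : Tendsto (fun n : ℕ => t₀ + n) atTop atTop :=
    tendsto_atTop_add_const_left _ _ tendsto_natCast_atTop_atTop
  have hfam := isVanishingInputFamily_clampShift hf₂ (fun _ => hφ) (a := fun n => t₀ + n)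
    (b := fun n => t₀ + 2 * n) (fun n => by positivity)
    (fun n => by linarith [n.cast_nonneg' (α := ℝ)]) (fun n => EReal.coe_lt_top _)
    (fun n u hu => hR u (by linarith [hu.1, n.cast_nonneg' (α := ℝ)]))
    (fun η hη => eventually_forall_Icc_norm_lt h₁ ha _ hη)
  refine hfam.false_of_le_norm hf₂ hattr ?_ hr fun n t ht => ?_
  · exact tendsto_natCast_atTop_atTop.congr fun n => by ring
  · rw [clampShift_of_mem ht]
    exact hlow _ (by linarith [ht.1])

theorem tendsto_snd (hf₂ : Continuous f₂)
    (hs₂ : IsStableOrigin fun y => f₂ (0, y)) (ha₂ : IsAttractiveOrigin fun y => f₂ (0, y))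
    (hφ : IsCascadeSolution f₁ f₂ ⊤ φ₁ φ₂) {Δ : ℝ} (hΔ : ∀ t, 0 ≤ t → ‖(φ₁ t, φ₂ t)‖ < Δ)
    (h₁ : Tendsto φ₁ atTop (𝓝 0)) : Tendsto φ₂ atTop (𝓝 0) := by
  have hR : ∀ t, 0 ≤ t → ‖φ₁ t‖ ≤ Δ ∧ ‖φ₂ t‖ ≤ Δ := fun t ht => by
    have h := hΔ t ht
    rw [Prod.norm_def, max_lt_iff] at h
    exact ⟨h.1.le, h.2.le⟩
  rw [NormedAddGroup.tendsto_nhds_zero]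
  by_contra! hφ₂
  obtain ⟨ε, hε, hfreq⟩ := hφ₂
  obtain ⟨r, hr, hrε, hstab⟩ := hs₂.exists_radius hε
  by_cases hdip : ∃ᶠ t in atTop, ‖φ₂ t‖ ≤ r
  · have hseg : ∀ n : ℕ, ∃ a b, (n : ℝ) ≤ a ∧ a ≤ b ∧ ‖φ₂ a‖ ≤ r ∧ ε ≤ ‖φ₂ b‖ := fun n => by
      obtain ⟨a, har, ha⟩ := (hdip.and_eventually (eventually_ge_atTop (n : ℝ))).exists
      obtain ⟨b, hbε, hb⟩ := (hfreq.and_eventually (eventually_ge_atTop a)).exists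
      exact ⟨a, b, ha, hb, har, hbε⟩
    choose a b hna hab ha hb using hseg
    have ha₀ : ∀ n, 0 ≤ a n := fun n => n.cast_nonneg.trans (hna n)
    exact false_of_cascade_crossings hf₂ ha₂ hr hrε (half_lt_self hε) hstab (fun _ => hφ) ha₀ hab
      (fun n => EReal.coe_lt_top _) (fun n u hu => (hR u ((ha₀ n).trans hu.1)).1)
      (fun η hη => eventually_forall_Icc_norm_lt h₁
        (tendsto_atTop_mono hna tendsto_natCast_atTop_atTop) b hη) ha hb
  · obtain ⟨t₀, ht₀⟩ := eventually_atTop.mp (not_frequently.mp hdip)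
    exact hφ.false_of_le_norm_snd hf₂ ha₂ hR h₁ hr (le_max_right t₀ 0) fun t ht =>
      (not_le.mp (ht₀ t ((le_max_left _ _).trans ht))).le

end IsCascadeSolution

theorem cascade_stable (hf₂ : Continuous f₂) (hs₁ : IsStableOrigin f₁)
    (hs₂ : IsStableOrigin fun y => f₂ (0, y)) (ha₂ : IsAttractiveOrigin fun y => f₂ (0, y)) :
    ∀ ε > (0 : ℝ), ∃ δ > (0 : ℝ), ∀ (T : EReal) (φ₁ : ℝ → EuclideanSpace ℝ (Fin m))
      (φ₂ : ℝ → EuclideanSpace ℝ (Fin k)), IsCascadeSolution f₁ f₂ T φ₁ φ₂ →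
        ‖(φ₁ 0, φ₂ 0)‖ < δ → ∀ t : ℝ, 0 ≤ t → (t : EReal) < T → ‖(φ₁ t, φ₂ t)‖ < ε := by
  intro ε hε
  by_contra! hcon
  obtain ⟨r, hr, hrε, hstab⟩ := hs₂.exists_radius hε
  obtain ⟨δ₁, hδ₁, hφ₁⟩ := hs₁ ε hε
  -- counterexamples starting within `δ₁` (so `‖g₁ n‖ < ε` throughout), within `r`, and
  -- ever closer to the origin
  choose T g₁ g₂ hg h0 t ht htT hεt using fun n : ℕ =>
    hcon (min (min δ₁ r) (1 / (n + 1))) (by positivity)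
  have h0 : ∀ n, ‖g₁ n 0‖ < min (min δ₁ r) (1 / (n + 1)) ∧
      ‖g₂ n 0‖ < min (min δ₁ r) (1 / (n + 1)) := fun n => by
    have h := h0 n
    rwa [Prod.norm_def, max_lt_iff] at h
  have hg₁ε : ∀ n (u : ℝ), 0 ≤ u → (u : EReal) < T n → ‖g₁ n u‖ < ε := fun n =>
    hφ₁ _ _ (hg n).isSolutionOn_fst ((h0 n).1.trans_le ((min_le_left _ _).trans (min_le_left _ _)))
  have hmem : ∀ n, ∀ u ∈ Icc 0 (t n), (u : EReal) < T n := fun n u hu =>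
    (EReal.coe_le_coe_iff.mpr hu.2).trans_lt (htT n)
  have hsmall : ∀ η > 0, ∀ᶠ n in atTop, ∀ u ∈ Icc 0 (t n), ‖g₁ n u‖ < η := by
    intro η hη
    obtain ⟨δ, hδ, hη'⟩ := hs₁ η hη
    filter_upwards [tendsto_one_div_add_atTop_nhds_zero_nat.eventually_lt_const hδ] with n hn u hu
    exact hη' _ _ (hg n).isSolutionOn_fst ((h0 n).1.trans (min_le_right _ _ |>.trans_lt hn))
      u hu.1 (hmem n u hu)
  refine false_of_cascade_crossings hf₂ ha₂ hr hrε (half_lt_self hε) hstab hg (a := fun _ => 0)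
    (fun _ => le_rfl) ht htT (R := ε) (fun n u hu => (hg₁ε n u hu.1 (hmem n u hu)).le) hsmall
    (fun n => ((h0 n).2.trans_le ((min_le_left _ _).trans (min_le_right _ _))).le) fun n => ?_
  have h := hεt n
  rw [Prod.norm_def] at h
  exact (le_max_iff.mp h).resolve_left (hg₁ε n _ (ht n) (htT n)).not_ge

end Cascade

theorem cascade_stability_ct_general {m k : ℕ}
    (f₁ : EuclideanSpace ℝ (Fin m) → EuclideanSpace ℝ (Fin m))
    (f₂ : EuclideanSpace ℝ (Fin m) × EuclideanSpace ℝ (Fin k) → EuclideanSpace ℝ (Fin k))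
    (hf₂ : Continuous f₂)
    -- the origin is stable for the upper subsystem ẋ₁ = f₁ x₁
    (hStab₁ : ∀ ε > (0 : ℝ), ∃ δ > (0 : ℝ), ∀ (T : EReal) (φ : ℝ → EuclideanSpace ℝ (Fin m)),
      IsSolutionOn f₁ T φ → ‖φ 0‖ < δ → ∀ t : ℝ, 0 ≤ t → (t : EReal) < T → ‖φ t‖ < ε)
    -- the origin is globally attractive for the upper subsystem
    (hAttr₁ : ∀ φ : ℝ → EuclideanSpace ℝ (Fin m), IsSolutionOn f₁ ⊤ φ →
      Tendsto φ atTop (𝓝 0))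
    -- the origin is stable for the zero-input lower subsystem ẋ₂ = f₂ (0, x₂)
    (hStab₂ : ∀ ε > (0 : ℝ), ∃ δ > (0 : ℝ), ∀ (T : EReal) (φ : ℝ → EuclideanSpace ℝ (Fin k)),
      IsSolutionOn (fun y => f₂ (0, y)) T φ → ‖φ 0‖ < δ →
        ∀ t : ℝ, 0 ≤ t → (t : EReal) < T → ‖φ t‖ < ε)
    -- the origin is globally attractive for the zero-input lower subsystem
    (hAttr₂ : ∀ φ : ℝ → EuclideanSpace ℝ (Fin k), IsSolutionOn (fun y => f₂ (0, y)) ⊤ φ →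
      Tendsto φ atTop (𝓝 0)) :
    -- the origin (0,0) is stable for the cascade
    (∀ ε > (0 : ℝ), ∃ δ > (0 : ℝ), ∀ (T : EReal) (φ₁ : ℝ → EuclideanSpace ℝ (Fin m))
      (φ₂ : ℝ → EuclideanSpace ℝ (Fin k)), IsCascadeSolution f₁ f₂ T φ₁ φ₂ →
        ‖(φ₁ 0, φ₂ 0)‖ < δ → ∀ t : ℝ, 0 ≤ t → (t : EReal) < T → ‖(φ₁ t, φ₂ t)‖ < ε) ∧
    -- every bounded complete solution of the cascade converges to the origin
    (∀ (φ₁ : ℝ → EuclideanSpace ℝ (Fin m)) (φ₂ : ℝ → EuclideanSpace ℝ (Fin k)),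
      IsCascadeSolution f₁ f₂ ⊤ φ₁ φ₂ →
      (∃ Δ > (0 : ℝ), ∀ t : ℝ, 0 ≤ t → ‖(φ₁ t, φ₂ t)‖ < Δ) →
      Tendsto (fun t : ℝ => (φ₁ t, φ₂ t)) atTop (𝓝 (0, 0))) := by
  refine ⟨cascade_stable hf₂ hStab₁ hStab₂ hAttr₂, fun φ₁ φ₂ hφ ⟨Δ, _, hΔ⟩ => ?_⟩
  have h₁ := hAttr₁ φ₁ hφ.isSolutionOn_fst
  exact h₁.prodMk_nhds (hφ.tendsto_snd hf₂ hStab₂ hAttr₂ hΔ h₁)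

theorem cascade_stability_ct {m k : ℕ}
    (f₁ : EuclideanSpace ℝ (Fin m) → EuclideanSpace ℝ (Fin m))
    (f₂ : EuclideanSpace ℝ (Fin m) × EuclideanSpace ℝ (Fin k) → EuclideanSpace ℝ (Fin k))
    (hf₁ : Continuous f₁) (hf₂ : Continuous f₂)
    -- the origin is stable for the upper subsystem ẋ₁ = f₁ x₁
    (hStab₁ : ∀ ε > (0 : ℝ), ∃ δ > (0 : ℝ), ∀ (T : EReal) (φ : ℝ → EuclideanSpace ℝ (Fin m)),
      IsSolutionOn f₁ T φ → ‖φ 0‖ < δ → ∀ t : ℝ, 0 ≤ t → (t : EReal) < T → ‖φ t‖ < ε)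
    -- the origin is globally attractive for the upper subsystem
    (hAttr₁ : ∀ φ : ℝ → EuclideanSpace ℝ (Fin m), IsSolutionOn f₁ ⊤ φ →
      Tendsto φ atTop (𝓝 0))
    -- the origin is stable for the zero-input lower subsystem ẋ₂ = f₂ (0, x₂)
    (hStab₂ : ∀ ε > (0 : ℝ), ∃ δ > (0 : ℝ), ∀ (T : EReal) (φ : ℝ → EuclideanSpace ℝ (Fin k)),
      IsSolutionOn (fun y => f₂ (0, y)) T φ → ‖φ 0‖ < δ →
        ∀ t : ℝ, 0 ≤ t → (t : EReal) < T → ‖φ t‖ < ε)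
    -- the origin is globally attractive for the zero-input lower subsystem
    (hAttr₂ : ∀ φ : ℝ → EuclideanSpace ℝ (Fin k), IsSolutionOn (fun y => f₂ (0, y)) ⊤ φ →
      Tendsto φ atTop (𝓝 0)) :
    -- the origin (0,0) is stable for the cascade
    (∀ ε > (0 : ℝ), ∃ δ > (0 : ℝ), ∀ (T : EReal) (φ₁ : ℝ → EuclideanSpace ℝ (Fin m))
      (φ₂ : ℝ → EuclideanSpace ℝ (Fin k)), IsCascadeSolution f₁ f₂ T φ₁ φ₂ →
        ‖(φ₁ 0, φ₂ 0)‖ < δ → ∀ t : ℝ, 0 ≤ t → (t : EReal) < T → ‖(φ₁ t, φ₂ t)‖ < ε) ∧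
    -- every bounded complete solution of the cascade converges to the origin
    (∀ (φ₁ : ℝ → EuclideanSpace ℝ (Fin m)) (φ₂ : ℝ → EuclideanSpace ℝ (Fin k)),
      IsCascadeSolution f₁ f₂ ⊤ φ₁ φ₂ →
      (∃ Δ > (0 : ℝ), ∀ t : ℝ, 0 ≤ t → ‖(φ₁ t, φ₂ t)‖ < Δ) →
      Tendsto (fun t : ℝ => (φ₁ t, φ₂ t)) atTop (𝓝 (0, 0))) :=
  cascade_stability_ct_general f₁ f₂ hf₂ hStab₁ hAttr₁ hStab₂ hAttr₂
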